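/- arXiv:2303.10769 — 3 statements merged into one kernel-verified Lean document; each statement's English description precedes it below -/
import Mathlib

section
/- Let Γ be a countable discrete group, μ an admissible, aperiodic probability measure on Γ, and ω a non-principal ultrafilter on ℕ (with the ratio-limit kernel H well defined, finite and positive). Then the ratio-limit radical R_μ = {g ∈ Γ : H(x,g) = H(x,e) for all x ∈ Γ} is a subgroup of Γ. -/
/-!
Since `P^m(x, y) = μ^{*m}(x⁻¹y)`, the ratios telescope:
`P^m(x,y)/P^m(e,y) · P^m(y⁻¹,e)/P^m(e,e) = P^m(y⁻¹x,e)/P^m(e,e)`, so in the limit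
`H(x,y) · h(y) = h(x⁻¹y)` with `h(g) = H(g⁻¹,e)` and `h(e) = 1`. Hence `g ∈ R_μ` iff
`h(ag) = h(a) h(g)` for all `a`, and for a nowhere-vanishing `h` these `g` form a subgroup.
-/

open Filter Topology

/-- The `n`-fold convolution power of `μ` (`convPow μ 0` is the point mass at the identity). -/
noncomputable def convPow {Γ : Type*} [Group Γ] (μ : Γ → ℝ) : ℕ → Γ → ℝ
  | 0 => fun g => by classical exact if g = (1 : Γ) then (1 : ℝ) else 0
  | n + 1 => fun g => ∑' h : Γ, μ h * convPow μ n (h⁻¹ * g)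

/-- The `n`-step transition probabilities `P^n(x,y) = μ^{*n}(x⁻¹y)`. -/
noncomputable def stepProb {Γ : Type*} [Group Γ] (μ : Γ → ℝ) (n : ℕ) (x y : Γ) : ℝ :=
  convPow μ n (x⁻¹ * y)

/-- `μ` is a probability measure on `Γ`: nonnegative with total mass one. -/
def IsProbMeasure {Γ : Type*} [Group Γ] (μ : Γ → ℝ) : Prop :=
  (∀ g, 0 ≤ μ g) ∧ HasSum μ 1

/-- `μ` is admissible: its support generates `Γ` as a semigroup. -/
def Admissible {Γ : Type*} [Group Γ] (μ : Γ → ℝ) : Prop :=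
  Subsemigroup.closure {g : Γ | 0 < μ g} = ⊤

/-- `μ` is aperiodic: `μ^{*n}(e) > 0` for all sufficiently large `n`. -/
def RWAperiodic {Γ : Type*} [Group Γ] (μ : Γ → ℝ) : Prop :=
  ∃ n₀ : ℕ, ∀ n ≥ n₀, 0 < convPow μ n 1

/-- `μ` is symmetric: `μ(g) = μ(g⁻¹)`. -/
def RWSymmetric {Γ : Type*} [Group Γ] (μ : Γ → ℝ) : Prop :=
  ∀ g : Γ, μ g⁻¹ = μ g

section MultiplicativeRadical

variable {G M : Type*} [Group G] [MonoidWithZero M] [IsRightCancelMulZero M]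

def multiplicativeRadical (f : G → M) (map_one : f 1 = 1) (ne_zero : ∀ g, f g ≠ 0) :
    Subgroup G where
  carrier := {g | ∀ a, f (a * g) = f a * f g}
  mul_mem' {a b} ha hb c := by rw [← mul_assoc, hb, ha, hb a, mul_assoc]
  one_mem' a := by rw [mul_one, map_one, mul_one]
  inv_mem' {a} ha c := by
    have hinv : f a⁻¹ * f a = 1 := by rw [← ha, inv_mul_cancel, map_one]
    apply mul_right_cancel₀ (ne_zero a)
    rw [← ha, inv_mul_cancel_right, mul_assoc, hinv, mul_one]

end MultiplicativeRadical

section RatioLimit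

variable {Γ ι : Type*} [Group Γ]

def HasRatioLimit (l : Filter ι) (p : ι → Γ → ℝ) (H : Γ → Γ → ℝ) : Prop :=
  ∀ x y, Tendsto (fun m => p m (x⁻¹ * y) / p m y) l (𝓝 (H x y))

variable {l : Filter ι} [l.NeBot] {p : ι → Γ → ℝ} {H : Γ → Γ → ℝ}

theorem ratioLimit_one_one
    (hH : HasRatioLimit l p H) (hp : ∀ y, ∀ᶠ m in l, p m y ≠ 0) : H 1 1 = 1 := by
  refine tendsto_nhds_unique (hH 1 1) (tendsto_const_nhds.congr' ?_)
  filter_upwards [hp 1] with m hm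
  rw [inv_one, one_mul, div_self hm]

theorem ratioLimit_mul_ratioLimit_inv
    (hH : HasRatioLimit l p H) (hp : ∀ y, ∀ᶠ m in l, p m y ≠ 0) (x y : Γ) :
    H x y * H y⁻¹ 1 = H (y⁻¹ * x) 1 := by
  refine tendsto_nhds_unique (((hH x y).mul (hH y⁻¹ 1)).congr' ?_) (hH (y⁻¹ * x) 1)
  filter_upwards [hp y] with m hm
  rw [inv_inv, mul_one, mul_inv_rev, inv_inv, mul_one, div_mul_div_cancel₀ hm]

theorem ratioLimit_eq_ratioLimit_one_iff
    (hH : HasRatioLimit l p H) (hp : ∀ y, ∀ᶠ m in l, p m y ≠ 0) {g : Γ}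
    (hg : H g⁻¹ 1 ≠ 0) :
    (∀ x, H x g = H x 1) ↔ ∀ a, H (a * g)⁻¹ 1 = H a⁻¹ 1 * H g⁻¹ 1 := by
  refine (forall_congr' fun x => ?_).trans inv_surjective.forall.symm
  rw [mul_inv_rev, inv_inv, ← ratioLimit_mul_ratioLimit_inv hH hp, mul_left_inj' hg]

end RatioLimit

theorem ratioLimitRadical_isSubgroup_general
    {Γ : Type*} [Group Γ] (μ : Γ → ℝ)
    (ω : Ultrafilter ℕ)
    (H : Γ → Γ → ℝ)
    -- the ratios `P^m(x,y)/P^m(e,y)` are eventually well defined and bounded above and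
    -- below by positive constants depending only on `x`
    (hbdd : ∀ x : Γ, ∃ c C : ℝ, 0 < c ∧ ∀ y : Γ, ∀ᶠ m in (ω : Filter ℕ),
      0 < stepProb μ m 1 y ∧ c ≤ stepProb μ m x y / stepProb μ m 1 y ∧
        stepProb μ m x y / stepProb μ m 1 y ≤ C)
    -- the ratio-limit kernel `H` is well defined along `ω`, finite and positive
    (hH : ∀ x y : Γ, Filter.Tendsto (fun m : ℕ => stepProb μ m x y / stepProb μ m 1 y)
      (ω : Filter ℕ) (nhds (H x y)))
    (hHpos : ∀ x y : Γ, 0 < H x y)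
    :
    ∃ S : Subgroup Γ, (S : Set Γ) = {g : Γ | ∀ x : Γ, H x g = H x 1} := by
  have hconv : HasRatioLimit (ω : Filter ℕ) (convPow μ) H := by
    simpa only [HasRatioLimit, stepProb, inv_one, one_mul] using hH
  have hp : ∀ y, ∀ᶠ m in (ω : Filter ℕ), convPow μ m y ≠ 0 := fun y => by
    obtain ⟨_, _, _, hb⟩ := hbdd 1
    filter_upwards [hb y] with m hm
    simpa only [stepProb, inv_one, one_mul] using hm.1.ne'
  have hne : ∀ g, H g⁻¹ 1 ≠ 0 := fun g => (hHpos g⁻¹ 1).ne'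
  have hone : H 1⁻¹ 1 = 1 := by rw [inv_one, ratioLimit_one_one hconv hp]
  exact ⟨multiplicativeRadical (fun a => H a⁻¹ 1) hone hne,
    Set.ext fun g => (ratioLimit_eq_ratioLimit_one_iff hconv hp (hne g)).symm⟩

/-- The ratio-limit radical `R_μ = {g : H(·,g) = H(·,e)}` is a subgroup of `Γ`. -/
theorem ratioLimitRadical_isSubgroup
    {Γ : Type*} [Group Γ] [Countable Γ] (μ : Γ → ℝ)
    (hprob : IsProbMeasure μ) (hadm : Admissible μ) (hap : RWAperiodic μ)
    (ω : Ultrafilter ℕ) (hω : (ω : Filter ℕ) ≤ Filter.atTop)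
    (H : Γ → Γ → ℝ)
    -- the ratios `P^m(x,y)/P^m(e,y)` are eventually well defined and bounded above and
    -- below by positive constants depending only on `x`
    (hbdd : ∀ x : Γ, ∃ c C : ℝ, 0 < c ∧ ∀ y : Γ, ∀ᶠ m in (ω : Filter ℕ),
      0 < stepProb μ m 1 y ∧ c ≤ stepProb μ m x y / stepProb μ m 1 y ∧
        stepProb μ m x y / stepProb μ m 1 y ≤ C)
    -- the ratio-limit kernel `H` is well defined along `ω`, finite and positive
    (hH : ∀ x y : Γ, Filter.Tendsto (fun m : ℕ => stepProb μ m x y / stepProb μ m 1 y)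
      (ω : Filter ℕ) (nhds (H x y)))
    (hHpos : ∀ x y : Γ, 0 < H x y)
    :
    ∃ S : Subgroup Γ, (S : Set Γ) = {g : Γ | ∀ x : Γ, H x g = H x 1} :=
  ratioLimitRadical_isSubgroup_general μ ω H hbdd hH hHpos
end

section
/- Let Γ be a countable discrete group and μ a finitely supported, admissible and symmetric probability measure on Γ with radius of convergence R of the Green function. Let s ≥ 1 be an integer such that for every 0 ≤ k < s and all x, y ∈ Γ the limit lim_{r→R⁻} G^{(k)}(x,y|r) exists and is finite (in the paper this situation is arranged with Γ a finitely generated non-elementary relatively hyperbolic group). Then for every 0 ≤ k < s and all x, y ∈ Γ the limit 𝔥_k(x,y) := lim_{r→R⁻} I^{(k)}(x,y|r)/I^{(k)}(e,y|r) exists and is positive, and for every y ∈ Γ the function x ↦ 𝔥_k(x,y) is R⁻¹-superharmonic but not R⁻¹-harmonic. -/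
open Filter Topology

/-- `μ` is finitely supported. -/
def FinSupported {Γ : Type*} [Group Γ] (μ : Γ → ℝ) : Prop :=
  {g : Γ | 0 < μ g}.Finite

/-- The Green function `G(x,y|r) = Σ_{n≥0} P^n(x,y) rⁿ`. -/
noncomputable def Green {Γ : Type*} [Group Γ] (μ : Γ → ℝ) (x y : Γ) (r : ℝ) : ℝ :=
  ∑' n : ℕ, stepProb μ n x y * r ^ n

/-- The common radius of convergence `R = (limsup_n P^n(e,e)^{1/n})⁻¹` of the Green function. -/
noncomputable def greenRadius {Γ : Type*} [Group Γ] (μ : Γ → ℝ) : ℝ :=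
  (Filter.limsup (fun n : ℕ => (convPow μ n 1) ^ ((n : ℝ)⁻¹)) Filter.atTop)⁻¹

/-- The iterated Green sums: `greenIter μ 0 = G` and for `s ≥ 1`,
`I^{(s)}(x,y|r) = Σ_{x₁,…,x_s} G(x,x₁|r) G(x₁,x₂|r) ⋯ G(x_s,y|r)`. -/
noncomputable def greenIter {Γ : Type*} [Group Γ] (μ : Γ → ℝ) : ℕ → Γ → Γ → ℝ → ℝ
  | 0 => fun x y r => Green μ x y r
  | s + 1 => fun x y r => ∑' z : Γ, Green μ x z r * greenIter μ s z y r

open scoped ENNReal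
set_option linter.unusedSectionVars false

namespace GreenRW

variable {Γ : Type*} [Group Γ]

/-- `μ` as an `ℝ≥0∞`-valued measure density. -/
noncomputable def nu (μ : Γ → ℝ) (g : Γ) : ℝ≥0∞ := ENNReal.ofReal (μ g)

/-- `ℝ≥0∞`-valued convolution powers. -/
noncomputable def Pe (μ : Γ → ℝ) : ℕ → Γ → ℝ≥0∞
  | 0 => fun g => by classical exact if g = (1 : Γ) then 1 else 0
  | n + 1 => fun g => ∑' h : Γ, nu μ h * Pe μ n (h⁻¹ * g)

variable {μ : Γ → ℝ}

theorem nu_ne_top (g : Γ) : nu μ g ≠ ∞ := ENNReal.ofReal_ne_top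

theorem nu_inv (hsymm : RWSymmetric μ) (g : Γ) : nu μ g⁻¹ = nu μ g := by
  unfold nu; rw [hsymm]

theorem nu_tsum (hp : IsProbMeasure μ) : ∑' g : Γ, nu μ g = 1 := by
  unfold nu
  rw [← ENNReal.ofReal_tsum_of_nonneg hp.1 hp.2.summable, hp.2.tsum_eq, ENNReal.ofReal_one]

theorem nu_le_one (hp : IsProbMeasure μ) (g : Γ) : nu μ g ≤ 1 := by
  rw [← nu_tsum hp]; exact ENNReal.le_tsum g

theorem Pe_mass (hp : IsProbMeasure μ) : ∀ n, ∑' g : Γ, Pe μ n g = 1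
  | 0 => by classical simp only [Pe]; exact tsum_ite_eq (1 : Γ) (fun _ => (1 : ℝ≥0∞))
  | n + 1 => by
    simp only [Pe]
    rw [ENNReal.tsum_comm]
    have h1 : ∀ h : Γ, ∑' g : Γ, nu μ h * Pe μ n (h⁻¹ * g) = nu μ h := by
      intro h
      rw [ENNReal.tsum_mul_left]
      have : ∑' g : Γ, Pe μ n (h⁻¹ * g) = ∑' g : Γ, Pe μ n g :=
        (Equiv.mulLeft h⁻¹).tsum_eq (Pe μ n)
      rw [this, Pe_mass hp n, mul_one]
    rw [tsum_congr h1, nu_tsum hp]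

theorem Pe_le_one (hp : IsProbMeasure μ) (n : ℕ) (g : Γ) : Pe μ n g ≤ 1 :=
  le_trans (ENNReal.le_tsum g) (le_of_eq (Pe_mass hp n))

theorem Pe_ne_top (hp : IsProbMeasure μ) (n : ℕ) (g : Γ) : Pe μ n g ≠ ∞ :=
  ne_top_of_le_ne_top ENNReal.one_ne_top (Pe_le_one hp n g)

theorem Pe_toReal (hp : IsProbMeasure μ) : ∀ n (g : Γ), (Pe μ n g).toReal = convPow μ n g
  | 0, g => by
    simp only [Pe, convPow]
    split_ifs <;> simp
  | n + 1, g => by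
    simp only [Pe, convPow]
    rw [ENNReal.tsum_toReal_eq fun h => ENNReal.mul_ne_top (nu_ne_top h) (Pe_ne_top hp n _)]
    exact tsum_congr fun h => by
      rw [ENNReal.toReal_mul, Pe_toReal hp n _]
      unfold nu
      rw [ENNReal.toReal_ofReal (hp.1 h)]

theorem convPow_nonneg (hp : IsProbMeasure μ) (n : ℕ) (g : Γ) : 0 ≤ convPow μ n g := by
  rw [← Pe_toReal hp]; exact ENNReal.toReal_nonneg

theorem convPow_le_one (hp : IsProbMeasure μ) (n : ℕ) (g : Γ) : convPow μ n g ≤ 1 := by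
  rw [← Pe_toReal hp]
  have := ENNReal.toReal_mono ENNReal.one_ne_top (Pe_le_one hp n g)
  simpa using this

theorem Pe_eq_ofReal (hp : IsProbMeasure μ) (n : ℕ) (g : Γ) :
    Pe μ n g = ENNReal.ofReal (convPow μ n g) := by
  rw [← Pe_toReal hp, ENNReal.ofReal_toReal (Pe_ne_top hp n g)]

theorem Pe_add (μ : Γ → ℝ) : ∀ m n (g : Γ),
    Pe μ (m + n) g = ∑' h : Γ, Pe μ m h * Pe μ n (h⁻¹ * g)
  | 0, n, g => by
    rw [zero_add]
    symm
    rw [tsum_eq_single (1 : Γ)]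
    · simp [Pe]
    · intro b hb
      simp only [Pe]; rw [if_neg hb, zero_mul]
  | m + 1, n, g => by
    have hidx : m + 1 + n = (m + n) + 1 := by omega
    rw [hidx]
    simp only [Pe]
    calc (∑' u : Γ, nu μ u * Pe μ (m + n) (u⁻¹ * g))
        = ∑' u : Γ, nu μ u * ∑' w : Γ, Pe μ m w * Pe μ n (w⁻¹ * (u⁻¹ * g)) := by
          exact tsum_congr fun u => by rw [Pe_add μ m n (u⁻¹ * g)]
      _ = ∑' u : Γ, ∑' w : Γ, nu μ u * (Pe μ m w * Pe μ n (w⁻¹ * (u⁻¹ * g))) := by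
          exact tsum_congr fun u => (ENNReal.tsum_mul_left).symm
      _ = ∑' u : Γ, ∑' h : Γ, (nu μ u * Pe μ m (u⁻¹ * h)) * Pe μ n (h⁻¹ * g) := by
          refine tsum_congr fun u => ?_
          have := (Equiv.mulLeft u).tsum_eq
            (fun h => (nu μ u * Pe μ m (u⁻¹ * h)) * Pe μ n (h⁻¹ * g))
          rw [← this]
          refine tsum_congr fun w => ?_
          simp only [Equiv.coe_mulLeft, inv_mul_cancel_left, mul_inv_rev, mul_assoc]
      _ = ∑' h : Γ, ∑' u : Γ, (nu μ u * Pe μ m (u⁻¹ * h)) * Pe μ n (h⁻¹ * g) :=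
          ENNReal.tsum_comm
      _ = ∑' h : Γ, (∑' u : Γ, nu μ u * Pe μ m (u⁻¹ * h)) * Pe μ n (h⁻¹ * g) := by
          exact tsum_congr fun h => ENNReal.tsum_mul_right

theorem Pe_one_eq (μ : Γ → ℝ) (g : Γ) : Pe μ 1 g = nu μ g := by
  show (∑' h : Γ, nu μ h * Pe μ 0 (h⁻¹ * g)) = nu μ g
  rw [tsum_eq_single g]
  · simp only [Pe]; rw [if_pos (by simp), mul_one]
  · intro b hb
    simp only [Pe]
    rw [if_neg (fun hc => hb (by rwa [inv_mul_eq_one] at hc)), mul_zero]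

theorem Pe_succ_right (μ : Γ → ℝ) (n : ℕ) (g : Γ) :
    Pe μ (n + 1) g = ∑' h : Γ, Pe μ n h * nu μ (h⁻¹ * g) := by
  rw [Pe_add μ n 1 g]
  exact tsum_congr fun h => by rw [Pe_one_eq]

theorem Pe_inv (hsymm : RWSymmetric μ) : ∀ n (g : Γ), Pe μ n g⁻¹ = Pe μ n g
  | 0, g => by simp only [Pe]; split_ifs with h1 h2 <;> simp_all [inv_eq_one]
  | n + 1, g => by
    calc Pe μ (n + 1) g⁻¹ = ∑' h : Γ, nu μ h * Pe μ n (h⁻¹ * g⁻¹) := by simp only [Pe]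
      _ = ∑' h : Γ, nu μ h * Pe μ n (g * h) := by
          refine tsum_congr fun h => ?_
          rw [show h⁻¹ * g⁻¹ = (g * h)⁻¹ by simp [mul_inv_rev], Pe_inv hsymm n (g * h)]
      _ = ∑' u : Γ, nu μ (g⁻¹ * u) * Pe μ n (g * (g⁻¹ * u)) :=
          ((Equiv.mulLeft g⁻¹).tsum_eq (fun h => nu μ h * Pe μ n (g * h))).symm
      _ = ∑' u : Γ, Pe μ n u * nu μ (u⁻¹ * g) := by
          refine tsum_congr fun u => ?_
          rw [mul_inv_cancel_left, show nu μ (g⁻¹ * u) = nu μ (u⁻¹ * g) from by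
            rw [← nu_inv hsymm (u⁻¹ * g)]; congr 1; simp [mul_inv_rev], mul_comm]
      _ = Pe μ (n + 1) g := (Pe_succ_right μ n g).symm

theorem Pe_mul_le (μ : Γ → ℝ) (m n : ℕ) (g h : Γ) :
    Pe μ m g * Pe μ n h ≤ Pe μ (m + n) (g * h) := by
  rw [Pe_add μ m n (g * h)]
  have := ENNReal.le_tsum (f := fun u : Γ => Pe μ m u * Pe μ n (u⁻¹ * (g * h))) g
  simpa [inv_mul_cancel_left] using this

theorem Pe_sq_le (hsymm : RWSymmetric μ) (n : ℕ) (g : Γ) :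
    Pe μ n g * Pe μ n g ≤ Pe μ (n + n) 1 := by
  calc Pe μ n g * Pe μ n g = Pe μ n g * Pe μ n g⁻¹ := by rw [Pe_inv hsymm]
    _ ≤ Pe μ (n + n) (g * g⁻¹) := Pe_mul_le μ n n g g⁻¹
    _ = Pe μ (n + n) 1 := by simp

theorem Pe_exists_pos (hadm : Admissible μ) (g : Γ) : ∃ n, 0 < Pe μ n g := by
  have hg : g ∈ Subsemigroup.closure {g : Γ | 0 < μ g} := by rw [hadm]; trivial
  induction hg using Subsemigroup.closure_induction with
  | mem x hx => exact ⟨1, by rw [Pe_one_eq]; exact ENNReal.ofReal_pos.mpr hx⟩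
  | mul x y hx hy ihx ihy =>
    obtain ⟨n, hn⟩ := ihx
    obtain ⟨m, hm⟩ := ihy
    exact ⟨n + m, lt_of_lt_of_le (ENNReal.mul_pos hn.ne' hm.ne') (Pe_mul_le μ n m x y)⟩


/-! ### Radius of convergence -/

noncomputable def lam (μ : Γ → ℝ) : ℝ :=
  Filter.limsup (fun n : ℕ => (convPow μ n 1) ^ ((n : ℝ)⁻¹)) Filter.atTop

theorem greenRadius_eq (μ : Γ → ℝ) : greenRadius μ = (lam μ)⁻¹ := rfl

theorem useq_nonneg (hp : IsProbMeasure μ) (n : ℕ) :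
    0 ≤ (convPow μ n 1) ^ ((n : ℝ)⁻¹) :=
  Real.rpow_nonneg (convPow_nonneg hp n 1) _

theorem useq_le_one (hp : IsProbMeasure μ) (n : ℕ) :
    (convPow μ n 1) ^ ((n : ℝ)⁻¹) ≤ 1 :=
  Real.rpow_le_one (convPow_nonneg hp n 1) (convPow_le_one hp n 1) (by positivity)

theorem lam_le_one (hp : IsProbMeasure μ) : lam μ ≤ 1 :=
  Filter.limsup_le_of_le
    (Filter.isCoboundedUnder_le_of_le Filter.atTop (fun n => useq_nonneg hp n))
    (Filter.Eventually.of_forall (useq_le_one hp))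

theorem exists_pos_supp (hp : IsProbMeasure μ) : ∃ g : Γ, 0 < μ g := by
  by_contra h
  push_neg at h
  have hz : μ = fun _ => 0 := funext fun g => le_antisymm (h g) (hp.1 g)
  have h2 := hp.2
  rw [hz] at h2
  exact (one_ne_zero : (1:ℝ) ≠ 0) (h2.unique hasSum_zero)

theorem Pe_two_pos (hp : IsProbMeasure μ) (hsymm : RWSymmetric μ) : 0 < Pe μ 2 1 := by
  obtain ⟨g₀, hg₀⟩ := exists_pos_supp hp
  have h1 : Pe μ 2 1 = ∑' h : Γ, Pe μ 1 h * nu μ (h⁻¹ * 1) := Pe_succ_right μ 1 1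
  have h2 : nu μ g₀ * nu μ g₀ ≤ Pe μ 2 1 := by
    rw [h1]
    have := ENNReal.le_tsum (f := fun h : Γ => Pe μ 1 h * nu μ (h⁻¹ * 1)) g₀
    calc nu μ g₀ * nu μ g₀ = Pe μ 1 g₀ * nu μ (g₀⁻¹ * 1) := by
          rw [Pe_one_eq, mul_one, nu_inv hsymm]
      _ ≤ _ := this
  have hpos : 0 < nu μ g₀ := ENNReal.ofReal_pos.mpr hg₀
  exact lt_of_lt_of_le (ENNReal.mul_pos hpos.ne' hpos.ne') h2

theorem cP_pos (hp : IsProbMeasure μ) (hsymm : RWSymmetric μ) : 0 < convPow μ 2 1 := by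
  rw [← Pe_toReal hp]
  exact ENNReal.toReal_pos (Pe_two_pos hp hsymm).ne' (Pe_ne_top hp 2 1)

theorem Pe_two_pow_le (μ : Γ → ℝ) : ∀ m : ℕ, (Pe μ 2 1) ^ m ≤ Pe μ (2 * m) 1
  | 0 => by rw [pow_zero, Nat.mul_zero]; simp [Pe]
  | m + 1 => by
    have h1 : (Pe μ 2 1) ^ (m + 1) = (Pe μ 2 1) ^ m * Pe μ 2 1 := pow_succ _ _
    have h2 : (Pe μ 2 1) ^ m * Pe μ 2 1 ≤ Pe μ (2 * m) 1 * Pe μ 2 1 :=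
      mul_le_mul_left (Pe_two_pow_le μ m) _
    have h3 : Pe μ (2 * m) 1 * Pe μ 2 1 ≤ Pe μ (2 * m + 2) (1 * 1) := Pe_mul_le μ _ 2 1 1
    rw [h1]
    refine le_trans h2 (le_trans h3 ?_)
    rw [one_mul, show 2 * m + 2 = 2 * (m + 1) by ring]

theorem cpow_le (hp : IsProbMeasure μ) (m : ℕ) :
    (convPow μ 2 1) ^ m ≤ convPow μ (2 * m) 1 := by
  rw [← Pe_toReal hp, ← Pe_toReal hp, ← ENNReal.toReal_pow]
  exact ENNReal.toReal_mono (Pe_ne_top hp _ _) (Pe_two_pow_le μ m)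

theorem lam_lower (hp : IsProbMeasure μ) (hsymm : RWSymmetric μ) :
    (convPow μ 2 1) ^ ((2 : ℝ)⁻¹) ≤ lam μ := by
  set c := convPow μ 2 1 with hc
  have hcpos : 0 < c := cP_pos hp hsymm
  refine Filter.le_limsup_of_frequently_le ?_ ⟨1, Filter.eventually_map.mpr
    (Filter.Eventually.of_forall (useq_le_one hp))⟩
  rw [Filter.frequently_atTop]
  intro N
  refine ⟨2 * max N 1, by omega, ?_⟩
  set m := max N 1 with hm
  have hm1 : 1 ≤ m := le_max_right N 1
  have hb : c ^ m ≤ convPow μ (2 * m) 1 := cpow_le hp m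
  have hexp : ((2 : ℝ))⁻¹ = (m : ℝ) * ((2 * m : ℕ) : ℝ)⁻¹ := by
    have hm0 : (m : ℝ) ≠ 0 := by positivity
    push_cast
    field_simp
  calc c ^ ((2:ℝ)⁻¹) = (c ^ (m : ℝ)) ^ (((2 * m : ℕ) : ℝ))⁻¹ := by
        rw [← Real.rpow_mul hcpos.le, ← hexp]
    _ = (c ^ m) ^ (((2 * m : ℕ) : ℝ))⁻¹ := by rw [Real.rpow_natCast]
    _ ≤ (convPow μ (2 * m) 1) ^ (((2 * m : ℕ) : ℝ))⁻¹ :=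
        Real.rpow_le_rpow (by positivity) hb (by positivity)

theorem lam_pos (hp : IsProbMeasure μ) (hsymm : RWSymmetric μ) : 0 < lam μ :=
  lt_of_lt_of_le (Real.rpow_pos_of_pos (cP_pos hp hsymm) _) (lam_lower hp hsymm)

theorem R_pos (hp : IsProbMeasure μ) (hsymm : RWSymmetric μ) : 0 < greenRadius μ := by
  rw [greenRadius_eq]; exact inv_pos.mpr (lam_pos hp hsymm)

theorem one_le_R (hp : IsProbMeasure μ) (hsymm : RWSymmetric μ) : 1 ≤ greenRadius μ := by
  rw [greenRadius_eq]
  have := one_div_le_one_div_of_le (lam_pos hp hsymm) (lam_le_one hp)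
  simpa [one_div] using this

theorem bound_exists (hp : IsProbMeasure μ) (hsymm : RWSymmetric μ) {Λ : ℝ}
    (hΛ : lam μ < Λ) : ∃ N : ℕ, ∀ g : Γ, ∀ n ≥ N, convPow μ n g ≤ Λ ^ n := by
  have hev : ∀ᶠ n in Filter.atTop, (convPow μ n 1) ^ ((n : ℝ)⁻¹) < Λ :=
    Filter.eventually_lt_of_limsup_lt hΛ ⟨1, Filter.eventually_map.mpr
      (Filter.Eventually.of_forall (useq_le_one hp))⟩
  obtain ⟨N₁, hN₁⟩ := Filter.eventually_atTop.mp hev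
  have hone : ∀ m, m ≥ max N₁ 1 → convPow μ m 1 ≤ Λ ^ m := by
    intro m hm
    have h := hN₁ m (le_trans (le_max_left _ _) hm)
    have hm0 : m ≠ 0 := by
      have := le_trans (le_max_right N₁ 1) hm; omega
    calc convPow μ m 1 = ((convPow μ m 1) ^ ((m : ℝ)⁻¹)) ^ m :=
          (Real.rpow_inv_natCast_pow (convPow_nonneg hp m 1) hm0).symm
      _ ≤ Λ ^ m := pow_le_pow_left₀ (Real.rpow_nonneg (convPow_nonneg hp m 1) _) h.le m
  refine ⟨max N₁ 1, fun g n hn => ?_⟩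
  have hΛpos : 0 < Λ := lt_of_lt_of_le (lam_pos hp hsymm) hΛ.le
  have hsq : convPow μ n g * convPow μ n g ≤ convPow μ (n + n) 1 := by
    rw [← Pe_toReal hp, ← Pe_toReal hp, ← ENNReal.toReal_mul]
    exact ENNReal.toReal_mono (Pe_ne_top hp _ _) (Pe_sq_le hsymm n g)
  have h2 : convPow μ (n + n) 1 ≤ Λ ^ (n + n) := hone (n + n) (by omega)
  have ha := convPow_nonneg hp n g
  by_contra hlt
  push_neg at hlt
  have hkey : Λ ^ n * Λ ^ n < convPow μ n g * convPow μ n g :=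
    mul_lt_mul'' hlt hlt (by positivity) (by positivity)
  rw [← pow_add] at hkey
  exact absurd (lt_of_lt_of_le hkey (le_trans hsq h2)) (lt_irrefl _)


/-! ### Summability and term-by-term differentiation -/

/-- The `j`-th "derivative series" of the Green function. -/
noncomputable def Dj (μ : Γ → ℝ) (g : Γ) (j : ℕ) (r : ℝ) : ℝ :=
  ∑' n : ℕ, (n.descFactorial j : ℝ) * convPow μ n g * r ^ (n - j)

theorem summable_desc (hp : IsProbMeasure μ) (hsymm : RWSymmetric μ) (g : Γ) (j : ℕ)
    {r : ℝ} (hr : |r| < greenRadius μ) :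
    Summable (fun n : ℕ => (n.descFactorial j : ℝ) * convPow μ n g * r ^ (n - j)) := by
  rcases eq_or_ne r 0 with rfl | hr0
  · apply summable_of_ne_finset_zero (s := Finset.range (j + 1))
    intro n hn
    rw [Finset.mem_range] at hn
    rw [zero_pow (by omega : n - j ≠ 0), mul_zero]
  · have hrpos : 0 < |r| := abs_pos.mpr hr0
    have hlam := lam_pos hp hsymm
    have hrlam : |r| * lam μ < 1 := by
      have h1 : |r| * lam μ < (lam μ)⁻¹ * lam μ := by
        rw [greenRadius_eq] at hr
        exact mul_lt_mul_of_pos_right hr hlam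
      rwa [inv_mul_cancel₀ hlam.ne'] at h1
    have h1 : lam μ < 1 / |r| := (lt_div_iff₀ hrpos).mpr (by linarith [hrlam])
    set Λ : ℝ := (lam μ + 1 / |r|) / 2 with hΛdef
    have hΛ1 : lam μ < Λ := by rw [hΛdef]; linarith
    have hΛ2 : Λ < 1 / |r| := by rw [hΛdef]; linarith
    have hΛpos : 0 < Λ := lt_trans hlam hΛ1
    have hq : Λ * |r| < 1 := by
      have := mul_lt_mul_of_pos_right hΛ2 hrpos
      rwa [div_mul_cancel₀ 1 hrpos.ne'] at this
    obtain ⟨N, hN⟩ := bound_exists hp hsymm hΛ1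
    apply Summable.of_norm_bounded_eventually
      (g := fun n : ℕ => (1 / |r| ^ j) * ((n : ℝ) ^ j * (Λ * |r|) ^ n))
    · exact (summable_pow_mul_geometric_of_norm_lt_one (R := ℝ) j
        (by rwa [Real.norm_eq_abs, abs_of_nonneg (by positivity : (0:ℝ) ≤ Λ * |r|)])).mul_left _
    · rw [Nat.cofinite_eq_atTop, Filter.eventually_atTop]
      refine ⟨max N j, fun n hn => ?_⟩
      have hnN : n ≥ N := le_trans (le_max_left _ _) hn
      have hnj : j ≤ n := le_trans (le_max_right _ _) hn
      have ha0 := convPow_nonneg hp n g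
      have haB := hN g n hnN
      have hpow : |r| ^ (n - j) = |r| ^ n / |r| ^ j := by
        rw [eq_div_iff (by positivity), ← pow_add]
        congr 1
        omega
      have hnorm : ‖(n.descFactorial j : ℝ) * convPow μ n g * r ^ (n - j)‖
          = (n.descFactorial j : ℝ) * convPow μ n g * |r| ^ (n - j) := by
        rw [Real.norm_eq_abs, abs_mul, abs_mul, abs_pow]
        rw [abs_of_nonneg (by positivity : (0:ℝ) ≤ (n.descFactorial j : ℝ)),
          abs_of_nonneg ha0]
      rw [hnorm, hpow]
      have hdesc : (n.descFactorial j : ℝ) ≤ (n : ℝ) ^ j := by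
        exact_mod_cast Nat.descFactorial_le_pow n j
      calc (n.descFactorial j : ℝ) * convPow μ n g * (|r| ^ n / |r| ^ j)
          ≤ (n : ℝ) ^ j * Λ ^ n * (|r| ^ n / |r| ^ j) := by
            apply mul_le_mul_of_nonneg_right _ (by positivity)
            exact mul_le_mul hdesc haB ha0 (by positivity)
        _ = (1 / |r| ^ j) * ((n : ℝ) ^ j * (Λ * |r|) ^ n) := by
            rw [mul_pow]; ring

theorem green_eq_Dj (μ : Γ → ℝ) (x y : Γ) (r : ℝ) : Green μ x y r = Dj μ (x⁻¹ * y) 0 r := by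
  unfold Green Dj stepProb
  exact tsum_congr fun n => by simp

theorem hasDerivAt_Dj (hp : IsProbMeasure μ) (hsymm : RWSymmetric μ) (g : Γ) (j : ℕ)
    {r : ℝ} (hr : |r| < greenRadius μ) :
    HasDerivAt (Dj μ g j) (Dj μ g (j + 1) r) r := by
  set R := greenRadius μ with hR
  set ρ : ℝ := (|r| + R) / 2 with hρdef
  have hρ1 : |r| < ρ := by rw [hρdef]; linarith
  have hρ2 : ρ < R := by rw [hρdef]; linarith
  have hρpos : 0 < ρ := lt_of_le_of_lt (abs_nonneg r) hρ1
  have hsum_u : Summable (fun n : ℕ =>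
      (n.descFactorial (j + 1) : ℝ) * convPow μ n g * ρ ^ (n - (j + 1))) :=
    summable_desc hp hsymm g (j + 1) (by rwa [abs_of_pos hρpos])
  have hmain := hasDerivAt_tsum_of_isPreconnected hsum_u (isOpen_Ioo (a := -ρ) (b := ρ))
    (convex_Ioo (-ρ) ρ).isPreconnected
    (g := fun (n : ℕ) (z : ℝ) => (n.descFactorial j : ℝ) * convPow μ n g * z ^ (n - j))
    (g' := fun (n : ℕ) (z : ℝ) =>
      (n.descFactorial (j + 1) : ℝ) * convPow μ n g * z ^ (n - (j + 1)))
    ?_ ?_ (y₀ := 0) ?_ ?_ (by rw [Set.mem_Ioo, ← abs_lt]; exact hρ1)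
  · exact hmain
  · intro n z hz
    have h := (hasDerivAt_pow (n - j) z).const_mul ((n.descFactorial j : ℝ) * convPow μ n g)
    convert h using 1
    show (n.descFactorial (j + 1) : ℝ) * convPow μ n g * z ^ (n - (j + 1))
      = (n.descFactorial j : ℝ) * convPow μ n g * (((n - j : ℕ) : ℝ) * z ^ (n - j - 1))
    have hcast : (n.descFactorial (j + 1) : ℝ) = ((n - j : ℕ) : ℝ) * (n.descFactorial j : ℝ) := by
      rw [← Nat.cast_mul, Nat.descFactorial_succ]
    rw [hcast, show n - (j + 1) = n - j - 1 by omega]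
    ring
    rfl
  · intro n z hz
    rw [Real.norm_eq_abs, abs_mul, abs_mul, abs_pow]
    rw [abs_of_nonneg (by positivity : (0:ℝ) ≤ (n.descFactorial (j+1) : ℝ)),
      abs_of_nonneg (convPow_nonneg hp n g)]
    apply mul_le_mul_of_nonneg_left _
      (mul_nonneg (Nat.cast_nonneg _) (convPow_nonneg hp n g))
    apply pow_le_pow_left₀ (abs_nonneg z)
    rw [Set.mem_Ioo] at hz
    exact (abs_lt.mpr ⟨hz.1, hz.2⟩).le
  · exact Set.mem_Ioo.mpr ⟨neg_lt_zero.mpr hρpos, hρpos⟩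
  · exact summable_desc hp hsymm g j (by rw [abs_zero]; exact R_pos hp hsymm)

theorem iteratedDeriv_green (hp : IsProbMeasure μ) (hsymm : RWSymmetric μ) (x y : Γ) :
    ∀ (j : ℕ) (r : ℝ), |r| < greenRadius μ →
      iteratedDeriv j (fun t : ℝ => Green μ x y t) r = Dj μ (x⁻¹ * y) j r := by
  intro j
  induction j with
  | zero => intro r _; rw [iteratedDeriv_zero]; exact green_eq_Dj μ x y r
  | succ j ih =>
    intro r hr
    rw [iteratedDeriv_succ]
    have hopen : IsOpen {t : ℝ | |t| < greenRadius μ} :=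
      isOpen_lt continuous_abs continuous_const
    have hev : (iteratedDeriv j fun t : ℝ => Green μ x y t) =ᶠ[nhds r] Dj μ (x⁻¹ * y) j := by
      filter_upwards [hopen.mem_nhds hr] with t ht using ih t ht
    rw [hev.deriv_eq, (hasDerivAt_Dj hp hsymm (x⁻¹ * y) j hr).deriv]

theorem partial_bound (hp : IsProbMeasure μ) (hsymm : RWSymmetric μ) (x y : Γ) (j : ℕ) {L : ℝ}
    (hL : Filter.Tendsto (fun r : ℝ => iteratedDeriv j (fun t : ℝ => Green μ x y t) r)
      (nhdsWithin (greenRadius μ) (Set.Iio (greenRadius μ))) (nhds L)) (N : ℕ) :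
    ∑ n ∈ Finset.range N, (n.descFactorial j : ℝ) * convPow μ n (x⁻¹ * y)
      * (greenRadius μ) ^ (n - j) ≤ L := by
  set R := greenRadius μ with hRdef
  have hRpos : 0 < R := R_pos hp hsymm
  have hmem : Set.Ioo 0 R ∈ nhdsWithin R (Set.Iio R) :=
    Ioo_mem_nhdsLT_of_mem ⟨hRpos, le_refl R⟩
  have habs : ∀ t : ℝ, t ∈ Set.Ioo 0 R → |t| < R := by
    intro t ht; rw [abs_of_pos ht.1]; exact ht.2
  have hDj : Filter.Tendsto (Dj μ (x⁻¹ * y) j) (nhdsWithin R (Set.Iio R)) (nhds L) := by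
    apply hL.congr'
    filter_upwards [hmem] with t ht
    exact iteratedDeriv_green hp hsymm x y j t (habs t ht)
  have hfin : Filter.Tendsto
      (fun r : ℝ => ∑ n ∈ Finset.range N,
        (n.descFactorial j : ℝ) * convPow μ n (x⁻¹ * y) * r ^ (n - j))
      (nhdsWithin R (Set.Iio R))
      (nhds (∑ n ∈ Finset.range N,
        (n.descFactorial j : ℝ) * convPow μ n (x⁻¹ * y) * R ^ (n - j))) := by
    apply Filter.Tendsto.mono_left _ nhdsWithin_le_nhds
    exact tendsto_finset_sum _ fun n _ =>
      ((continuous_const.mul (continuous_pow (n - j))).tendsto R)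
  have hle : ∀ᶠ t in nhdsWithin R (Set.Iio R),
      (∑ n ∈ Finset.range N,
        (n.descFactorial j : ℝ) * convPow μ n (x⁻¹ * y) * t ^ (n - j)) ≤ Dj μ (x⁻¹ * y) j t := by
    filter_upwards [hmem] with t ht
    exact Summable.sum_le_tsum (Finset.range N)
      (fun n _ => by
        have := convPow_nonneg hp n (x⁻¹ * y)
        have ht0 := ht.1.le
        positivity)
      (summable_desc hp hsymm (x⁻¹ * y) j (habs t ht))
  exact le_of_tendsto_of_tendsto hfin hDj hle


/-! ### The `ℝ≥0∞`-valued Green function and its iterates -/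

noncomputable def GE (μ : Γ → ℝ) (x y : Γ) (t : ℝ≥0∞) : ℝ≥0∞ :=
  ∑' n : ℕ, Pe μ n (x⁻¹ * y) * t ^ n

noncomputable def IE (μ : Γ → ℝ) : ℕ → Γ → Γ → ℝ≥0∞ → ℝ≥0∞
  | 0 => GE μ
  | k + 1 => fun x y t => ∑' z : Γ, GE μ x z t * IE μ k z y t

theorem tsum_chapman (μ : Γ → ℝ) (n m : ℕ) (x y : Γ) :
    ∑' z : Γ, Pe μ n (x⁻¹ * z) * Pe μ m (z⁻¹ * y) = Pe μ (n + m) (x⁻¹ * y) := by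
  rw [Pe_add μ n m]
  rw [← (Equiv.mulLeft x).tsum_eq (fun z => Pe μ n (x⁻¹ * z) * Pe μ m (z⁻¹ * y))]
  refine tsum_congr fun h => ?_
  simp only [Equiv.coe_mulLeft, inv_mul_cancel_left, mul_inv_rev]
  rw [mul_assoc]

/-- The reindexing equivalence `(N, m ≤ N) ≃ (n, m)` with `N = n + m`. -/
def shiftEquiv : (Σ N : ℕ, Fin (N + 1)) ≃ ℕ × ℕ where
  toFun p := (p.1 - (p.2 : ℕ), (p.2 : ℕ))
  invFun q := ⟨q.1 + q.2, ⟨q.2, by omega⟩⟩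
  left_inv := by
    rintro ⟨N, ⟨m, hm⟩⟩
    have h : N - m + m = N := by omega
    show (⟨N - m + m, ⟨m, by omega⟩⟩ : Σ N : ℕ, Fin (N + 1)) = ⟨N, ⟨m, hm⟩⟩
    refine Sigma.ext h ?_
    exact (Fin.heq_ext_iff (congrArg (· + 1) h)).mpr rfl
  right_inv := by rintro ⟨n, m⟩; simp

theorem tsum_shift (F : ℕ → ℕ → ℝ≥0∞) :
    ∑' n : ℕ, ∑' m : ℕ, F (n + m) m = ∑' N : ℕ, ∑ m ∈ Finset.range (N + 1), F N m := by
  rw [← ENNReal.tsum_prod (f := fun n m => F (n + m) m)]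
  rw [← shiftEquiv.tsum_eq (fun p : ℕ × ℕ => F (p.1 + p.2) p.2)]
  rw [ENNReal.tsum_sigma']
  refine tsum_congr fun N => ?_
  rw [tsum_fintype]
  rw [← Fin.sum_univ_eq_sum_range (fun m => F N m) (N + 1)]
  refine Finset.sum_congr rfl fun m _ => ?_
  show F (N - (m : ℕ) + (m : ℕ)) (m : ℕ) = F N (m : ℕ)
  congr 1
  omega


theorem choose_sum_range (N k : ℕ) :
    ∑ m ∈ Finset.range (N + 1), (m + k).choose k = (N + (k + 1)).choose (k + 1) := by
  have h1 : ∑ m ∈ Finset.range (N + 1), (m + k).choose k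
      = ∑ i ∈ Finset.Icc k (N + k), i.choose k := by
    rw [← Finset.Ico_add_one_right_eq_Icc, Finset.sum_Ico_eq_sum_range]
    refine (Finset.sum_congr (by congr 1; omega) fun i _ => ?_).symm
    rw [Nat.add_comm k i]
  rw [h1, Nat.sum_Icc_choose]
  congr 1

theorem IE_formula (μ : Γ → ℝ) :
    ∀ (k : ℕ) (x y : Γ) (t : ℝ≥0∞), IE μ k x y t
      = ∑' n : ℕ, (((n + k).choose k : ℕ) : ℝ≥0∞) * Pe μ n (x⁻¹ * y) * t ^ n
  | 0, x, y, t => by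
    show GE μ x y t = _
    unfold GE
    exact tsum_congr fun n => by simp
  | k + 1, x, y, t => by
    show (∑' z : Γ, GE μ x z t * IE μ k z y t) = _
    calc (∑' z : Γ, GE μ x z t * IE μ k z y t)
        = ∑' z : Γ, ∑' n : ℕ, ∑' m : ℕ,
            (Pe μ n (x⁻¹ * z) * t ^ n) * ((((m + k).choose k : ℕ) : ℝ≥0∞)
              * Pe μ m (z⁻¹ * y) * t ^ m) := by
          refine tsum_congr fun z => ?_
          rw [IE_formula μ k z y t]
          unfold GE
          rw [← ENNReal.tsum_mul_right]
          exact tsum_congr fun n => ENNReal.tsum_mul_left.symm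
      _ = ∑' n : ℕ, ∑' m : ℕ, ∑' z : Γ,
            (Pe μ n (x⁻¹ * z) * t ^ n) * ((((m + k).choose k : ℕ) : ℝ≥0∞)
              * Pe μ m (z⁻¹ * y) * t ^ m) := by
          rw [ENNReal.tsum_comm]
          exact tsum_congr fun n => ENNReal.tsum_comm
      _ = ∑' n : ℕ, ∑' m : ℕ, (((m + k).choose k : ℕ) : ℝ≥0∞)
            * Pe μ (n + m) (x⁻¹ * y) * t ^ (n + m) := by
          refine tsum_congr fun n => tsum_congr fun m => ?_
          calc (∑' z : Γ, (Pe μ n (x⁻¹ * z) * t ^ n) * ((((m + k).choose k : ℕ) : ℝ≥0∞)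
                  * Pe μ m (z⁻¹ * y) * t ^ m))
              = ∑' z : Γ, ((((m + k).choose k : ℕ) : ℝ≥0∞) * (t ^ n * t ^ m))
                  * (Pe μ n (x⁻¹ * z) * Pe μ m (z⁻¹ * y)) := by
                exact tsum_congr fun z => by ring
            _ = ((((m + k).choose k : ℕ) : ℝ≥0∞) * (t ^ n * t ^ m))
                  * ∑' z : Γ, Pe μ n (x⁻¹ * z) * Pe μ m (z⁻¹ * y) := ENNReal.tsum_mul_left
            _ = (((m + k).choose k : ℕ) : ℝ≥0∞) * Pe μ (n + m) (x⁻¹ * y) * t ^ (n + m) := by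
                rw [tsum_chapman, ← pow_add]; ring
      _ = ∑' N : ℕ, ∑ m ∈ Finset.range (N + 1),
            (((m + k).choose k : ℕ) : ℝ≥0∞) * Pe μ N (x⁻¹ * y) * t ^ N :=
          tsum_shift (fun N m => (((m + k).choose k : ℕ) : ℝ≥0∞) * Pe μ N (x⁻¹ * y) * t ^ N)
      _ = ∑' n : ℕ, (((n + (k + 1)).choose (k + 1) : ℕ) : ℝ≥0∞) * Pe μ n (x⁻¹ * y) * t ^ n := by
          refine tsum_congr fun N => ?_
          rw [← Finset.sum_mul, ← Finset.sum_mul, ← Nat.cast_sum, choose_sum_range]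

theorem IE_mono (μ : Γ → ℝ) (k : ℕ) (x y : Γ) {t₁ t₂ : ℝ≥0∞} (h : t₁ ≤ t₂) :
    IE μ k x y t₁ ≤ IE μ k x y t₂ := by
  rw [IE_formula, IE_formula]
  exact ENNReal.tsum_le_tsum fun n =>
    mul_le_mul_right (pow_le_pow_left' h n) _

theorem IE_pos (hadm : Admissible μ) (k : ℕ) (x y : Γ) {t : ℝ≥0∞} (ht : 0 < t) :
    0 < IE μ k x y t := by
  rw [IE_formula]
  obtain ⟨N, hN⟩ := Pe_exists_pos hadm (x⁻¹ * y)
  refine lt_of_lt_of_le ?_ (ENNReal.le_tsum N)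
  have h1 : (0:ℝ≥0∞) < (((N + k).choose k : ℕ) : ℝ≥0∞) := by
    have := Nat.choose_pos (show k ≤ N + k by omega)
    exact_mod_cast this
  exact ENNReal.mul_pos (ENNReal.mul_pos h1.ne' hN.ne').ne' (ENNReal.pow_pos ht N).ne'

theorem tsum_choose_lt_top (hp : IsProbMeasure μ) (hsymm : RWSymmetric μ) (x y : Γ) (j : ℕ)
    {L : ℝ}
    (hL : Filter.Tendsto (fun r : ℝ => iteratedDeriv j (fun t : ℝ => Green μ x y t) r)
      (nhdsWithin (greenRadius μ) (Set.Iio (greenRadius μ))) (nhds L)) :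
    ∑' n : ℕ, ((n.choose j : ℕ) : ℝ≥0∞) * Pe μ n (x⁻¹ * y)
      * (ENNReal.ofReal (greenRadius μ)) ^ n < ∞ := by
  set R := greenRadius μ with hRdef
  have hR0 : (0:ℝ) ≤ R := (R_pos hp hsymm).le
  have key : ∀ N : ℕ, ∑ n ∈ Finset.range N,
      (n.choose j : ℝ) * convPow μ n (x⁻¹ * y) * R ^ n ≤ R ^ j * L := by
    intro N
    have hterm : ∀ n : ℕ, (n.choose j : ℝ) * convPow μ n (x⁻¹ * y) * R ^ n
        ≤ R ^ j * ((n.descFactorial j : ℝ) * convPow μ n (x⁻¹ * y) * R ^ (n - j)) := by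
      intro n
      by_cases hnj : j ≤ n
      · have hpow : R ^ n = R ^ j * R ^ (n - j) := by
          rw [← pow_add]; congr 1; omega
        rw [hpow]
        have hc : (n.choose j : ℝ) ≤ (n.descFactorial j : ℝ) := by
          exact_mod_cast Nat.choose_le_descFactorial n j
        have h0 := convPow_nonneg hp n (x⁻¹ * y)
        calc (n.choose j : ℝ) * convPow μ n (x⁻¹ * y) * (R ^ j * R ^ (n - j))
            = R ^ j * ((n.choose j : ℝ) * convPow μ n (x⁻¹ * y) * R ^ (n - j)) := by ring
          _ ≤ R ^ j * ((n.descFactorial j : ℝ) * convPow μ n (x⁻¹ * y) * R ^ (n - j)) := by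
              apply mul_le_mul_of_nonneg_left _ (by positivity)
              apply mul_le_mul_of_nonneg_right _ (by positivity)
              exact mul_le_mul_of_nonneg_right hc h0
      · rw [Nat.choose_eq_zero_of_lt (by omega)]
        have h0 := convPow_nonneg hp n (x⁻¹ * y)
        have : (0:ℝ) ≤ R ^ j * ((n.descFactorial j : ℝ) * convPow μ n (x⁻¹ * y) * R ^ (n - j)) := by
          positivity
        simpa using this
    calc ∑ n ∈ Finset.range N, (n.choose j : ℝ) * convPow μ n (x⁻¹ * y) * R ^ n
        ≤ ∑ n ∈ Finset.range N,
            R ^ j * ((n.descFactorial j : ℝ) * convPow μ n (x⁻¹ * y) * R ^ (n - j)) :=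
          Finset.sum_le_sum fun n _ => hterm n
      _ = R ^ j * ∑ n ∈ Finset.range N,
            (n.descFactorial j : ℝ) * convPow μ n (x⁻¹ * y) * R ^ (n - j) := by
          rw [Finset.mul_sum]
      _ ≤ R ^ j * L := by
          apply mul_le_mul_of_nonneg_left _ (by positivity)
          exact partial_bound hp hsymm x y j hL N
  have hofr : ∀ n : ℕ, ((n.choose j : ℕ) : ℝ≥0∞) * Pe μ n (x⁻¹ * y) * (ENNReal.ofReal R) ^ n
      = ENNReal.ofReal ((n.choose j : ℝ) * convPow μ n (x⁻¹ * y) * R ^ n) := by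
    intro n
    rw [Pe_eq_ofReal hp, ← ENNReal.ofReal_pow hR0, ← ENNReal.ofReal_natCast,
      ← ENNReal.ofReal_mul (Nat.cast_nonneg _),
      ← ENNReal.ofReal_mul (mul_nonneg (Nat.cast_nonneg _) (convPow_nonneg hp n _))]
  calc ∑' n : ℕ, ((n.choose j : ℕ) : ℝ≥0∞) * Pe μ n (x⁻¹ * y) * (ENNReal.ofReal R) ^ n
      = ⨆ N : ℕ, ∑ n ∈ Finset.range N,
          ((n.choose j : ℕ) : ℝ≥0∞) * Pe μ n (x⁻¹ * y) * (ENNReal.ofReal R) ^ n :=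
        ENNReal.tsum_eq_iSup_nat
    _ ≤ ENNReal.ofReal (R ^ j * L) := by
        refine iSup_le fun N => ?_
        rw [Finset.sum_congr rfl fun n _ => hofr n,
          ← ENNReal.ofReal_sum_of_nonneg (fun n _ => by
            have := convPow_nonneg hp n (x⁻¹ * y); positivity)]
        exact ENNReal.ofReal_le_ofReal (key N)
    _ < ∞ := ENNReal.ofReal_lt_top


/-! ### Finiteness of the iterated Green functions at the radius -/

/-- The standing hypothesis: all derivatives of order `< s` of the Green function have
finite limits at the radius of convergence. -/
def DerivBound (μ : Γ → ℝ) (s : ℕ) : Prop :=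
  ∀ k : ℕ, k < s → ∀ x y : Γ, ∃ L : ℝ,
    Filter.Tendsto (fun r : ℝ => iteratedDeriv k (fun t : ℝ => Green μ x y t) r)
      (nhdsWithin (greenRadius μ) (Set.Iio (greenRadius μ))) (nhds L)

theorem IE_ne_top (hp : IsProbMeasure μ) (hsymm : RWSymmetric μ) {s : ℕ}
    (hGB : DerivBound μ s) {k : ℕ} (hk : k < s) (x y : Γ) :
    IE μ k x y (ENNReal.ofReal (greenRadius μ)) ≠ ∞ := by
  rw [IE_formula]
  set T := ENNReal.ofReal (greenRadius μ) with hT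
  have hvdm : ∀ n : ℕ, (((n + k).choose k : ℕ) : ℝ≥0∞) * Pe μ n (x⁻¹ * y) * T ^ n
      = ∑ ij ∈ Finset.HasAntidiagonal.antidiagonal k, ((k.choose ij.2 : ℕ) : ℝ≥0∞)
        * (((n.choose ij.1 : ℕ) : ℝ≥0∞) * Pe μ n (x⁻¹ * y) * T ^ n) := by
    intro n
    rw [Nat.add_choose_eq, Nat.cast_sum, Finset.sum_mul, Finset.sum_mul]
    exact Finset.sum_congr rfl fun ij _ => by push_cast; ring
  rw [tsum_congr hvdm, Summable.tsum_finsetSum (fun ij _ => ENNReal.summable)]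
  refine (ENNReal.sum_lt_top.mpr fun ij hij => ?_).ne
  have hij1 : ij.1 ≤ k := by
    have := Finset.HasAntidiagonal.mem_antidiagonal.mp hij; omega
  obtain ⟨L, hL⟩ := hGB ij.1 (lt_of_le_of_lt hij1 hk) x y
  rw [ENNReal.tsum_mul_left]
  exact ENNReal.mul_lt_top (ENNReal.natCast_ne_top _).lt_top (tsum_choose_lt_top hp hsymm x y ij.1 hL)

theorem green_toReal (hp : IsProbMeasure μ) (x y : Γ) {r : ℝ} (h0 : 0 ≤ r) :
    Green μ x y r = (GE μ x y (ENNReal.ofReal r)).toReal := by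
  unfold Green GE stepProb
  rw [ENNReal.tsum_toReal_eq fun n =>
    ENNReal.mul_ne_top (Pe_ne_top hp n _) (ENNReal.pow_ne_top ENNReal.ofReal_ne_top)]
  exact tsum_congr fun n => by
    rw [ENNReal.toReal_mul, ENNReal.toReal_pow, ENNReal.toReal_ofReal h0, Pe_toReal hp]

theorem greenIter_eq (hp : IsProbMeasure μ) (hsymm : RWSymmetric μ) {s : ℕ}
    (hGB : DerivBound μ s) : ∀ k : ℕ, k < s → ∀ (x y : Γ) (r : ℝ), 0 ≤ r →
      r < greenRadius μ →
      greenIter μ k x y r = (IE μ k x y (ENNReal.ofReal r)).toReal := by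
  intro k
  induction k with
  | zero =>
    intro _ x y r h0 _
    exact green_toReal hp x y h0
  | succ k ih =>
    intro hk x y r h0 hrR
    have hk' : k < s := by omega
    have h0s : 0 < s := by omega
    have hle : ENNReal.ofReal r ≤ ENNReal.ofReal (greenRadius μ) :=
      ENNReal.ofReal_le_ofReal hrR.le
    have hGEfin : ∀ z : Γ, GE μ x z (ENNReal.ofReal r) ≠ ∞ := fun z =>
      ne_top_of_le_ne_top (IE_ne_top hp hsymm hGB h0s x z)
        (IE_mono μ 0 x z hle)
    have hIEfin : ∀ z : Γ, IE μ k z y (ENNReal.ofReal r) ≠ ∞ := fun z =>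
      ne_top_of_le_ne_top (IE_ne_top hp hsymm hGB hk' z y) (IE_mono μ k z y hle)
    show (∑' z : Γ, Green μ x z r * greenIter μ k z y r) = _
    have hstep : (IE μ (k+1) x y (ENNReal.ofReal r)).toReal
        = ∑' z : Γ, (GE μ x z (ENNReal.ofReal r) * IE μ k z y (ENNReal.ofReal r)).toReal := by
      show (∑' z : Γ, GE μ x z (ENNReal.ofReal r) * IE μ k z y (ENNReal.ofReal r)).toReal = _
      exact ENNReal.tsum_toReal_eq fun z => ENNReal.mul_ne_top (hGEfin z) (hIEfin z)
    rw [hstep]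
    exact tsum_congr fun z => by
      rw [ENNReal.toReal_mul, ← green_toReal hp x z h0, ← ih hk' z y r h0 hrR]

theorem IE_toReal_series (hp : IsProbMeasure μ) (k : ℕ) (x y : Γ) {t : ℝ} (h0 : 0 ≤ t) :
    (IE μ k x y (ENNReal.ofReal t)).toReal
      = ∑' n : ℕ, ((n + k).choose k : ℝ) * convPow μ n (x⁻¹ * y) * t ^ n := by
  rw [IE_formula]
  rw [ENNReal.tsum_toReal_eq fun n => ENNReal.mul_ne_top
    (ENNReal.mul_ne_top (ENNReal.natCast_ne_top _) (Pe_ne_top hp n _))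
    (ENNReal.pow_ne_top ENNReal.ofReal_ne_top)]
  exact tsum_congr fun n => by
    rw [ENNReal.toReal_mul, ENNReal.toReal_mul, ENNReal.toReal_pow,
      ENNReal.toReal_ofReal h0, ENNReal.toReal_natCast, Pe_toReal hp]

theorem tendsto_greenIter (hp : IsProbMeasure μ) (hsymm : RWSymmetric μ)
    (hadm : Admissible μ) {s : ℕ} (hGB : DerivBound μ s) {k : ℕ} (hk : k < s) (x y : Γ) :
    Filter.Tendsto (fun r : ℝ => greenIter μ k x y r)
      (nhdsWithin (greenRadius μ) (Set.Iio (greenRadius μ)))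
      (nhds ((IE μ k x y (ENNReal.ofReal (greenRadius μ))).toReal)) := by
  set R := greenRadius μ with hRdef
  have hRpos : 0 < R := R_pos hp hsymm
  set c : ℕ → ℝ := fun n => ((n + k).choose k : ℝ) * convPow μ n (x⁻¹ * y) with hc
  have hc0 : ∀ n, 0 ≤ c n := fun n =>
    mul_nonneg (Nat.cast_nonneg _) (convPow_nonneg hp n _)
  have hsumR : Summable (fun n => c n * R ^ n) := by
    have h1 := ENNReal.summable_toReal (f := fun n : ℕ =>
      (((n + k).choose k : ℕ) : ℝ≥0∞) * Pe μ n (x⁻¹ * y) * (ENNReal.ofReal R) ^ n)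
      (by rw [← IE_formula]; exact IE_ne_top hp hsymm hGB hk x y)
    refine h1.congr fun n => ?_
    rw [ENNReal.toReal_mul, ENNReal.toReal_mul, ENNReal.toReal_pow,
      ENNReal.toReal_ofReal hRpos.le, ENNReal.toReal_natCast, Pe_toReal hp]
  have hseries : ∀ t : ℝ, 0 ≤ t → (IE μ k x y (ENNReal.ofReal t)).toReal
      = ∑' n : ℕ, c n * t ^ n := by
    intro t ht
    rw [IE_toReal_series hp k x y ht]
  have hmem : Set.Ioo 0 R ∈ nhdsWithin R (Set.Iio R) :=
    Ioo_mem_nhdsLT_of_mem ⟨hRpos, le_refl R⟩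
  have htphi : Filter.Tendsto (fun r : ℝ => ∑' n : ℕ, c n * r ^ n)
      (nhdsWithin R (Set.Iio R)) (nhds (∑' n : ℕ, c n * R ^ n)) := by
    apply tendsto_tsum_of_dominated_convergence hsumR
    · intro n
      exact ((continuous_const.mul (continuous_pow n)).tendsto R).mono_left nhdsWithin_le_nhds
    · filter_upwards [hmem] with t ht n
      rw [Real.norm_eq_abs, abs_mul, abs_of_nonneg (hc0 n), abs_pow,
        abs_of_pos ht.1]
      exact mul_le_mul_of_nonneg_left
        (pow_le_pow_left₀ ht.1.le ht.2.le n) (hc0 n)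
  rw [hseries R hRpos.le]
  apply htphi.congr'
  filter_upwards [hmem] with t ht
  rw [← hseries t ht.1.le, greenIter_eq hp hsymm hGB k hk x y t ht.1.le ht.2]

/-! ### Superharmonicity -/

theorem tsum_nu_IE (μ : Γ → ℝ) (k : ℕ) (x y : Γ) (t : ℝ≥0∞) :
    ∑' z : Γ, nu μ (x⁻¹ * z) * IE μ k z y t
      = ∑' n : ℕ, (((n + k).choose k : ℕ) : ℝ≥0∞) * Pe μ (n + 1) (x⁻¹ * y) * t ^ n := by
  calc ∑' z : Γ, nu μ (x⁻¹ * z) * IE μ k z y t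
      = ∑' z : Γ, ∑' n : ℕ, nu μ (x⁻¹ * z)
          * ((((n + k).choose k : ℕ) : ℝ≥0∞) * Pe μ n (z⁻¹ * y) * t ^ n) := by
        exact tsum_congr fun z => by rw [IE_formula]; exact ENNReal.tsum_mul_left.symm
    _ = ∑' n : ℕ, ∑' z : Γ, nu μ (x⁻¹ * z)
          * ((((n + k).choose k : ℕ) : ℝ≥0∞) * Pe μ n (z⁻¹ * y) * t ^ n) :=
        ENNReal.tsum_comm
    _ = ∑' n : ℕ, (((n + k).choose k : ℕ) : ℝ≥0∞) * Pe μ (n + 1) (x⁻¹ * y) * t ^ n := by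
        refine tsum_congr fun n => ?_
        have hz : ∑' z : Γ, Pe μ 1 (x⁻¹ * z) * Pe μ n (z⁻¹ * y) = Pe μ (1 + n) (x⁻¹ * y) :=
          tsum_chapman μ 1 n x y
        calc ∑' z : Γ, nu μ (x⁻¹ * z)
              * ((((n + k).choose k : ℕ) : ℝ≥0∞) * Pe μ n (z⁻¹ * y) * t ^ n)
            = ((((n + k).choose k : ℕ) : ℝ≥0∞) * t ^ n)
              * ∑' z : Γ, Pe μ 1 (x⁻¹ * z) * Pe μ n (z⁻¹ * y) := by
              rw [show (∑' z : Γ, nu μ (x⁻¹ * z) * ((((n + k).choose k : ℕ) : ℝ≥0∞)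
                * Pe μ n (z⁻¹ * y) * t ^ n))
                = ∑' z : Γ, ((((n + k).choose k : ℕ) : ℝ≥0∞) * t ^ n)
                  * (Pe μ 1 (x⁻¹ * z) * Pe μ n (z⁻¹ * y)) from
                tsum_congr fun z => by rw [Pe_one_eq]; ring]
              rw [ENNReal.tsum_mul_left]
          _ = (((n + k).choose k : ℕ) : ℝ≥0∞) * Pe μ (n + 1) (x⁻¹ * y) * t ^ n := by
              rw [hz, Nat.add_comm 1 n]; ring

/-- Kronecker delta. -/
noncomputable def delta (x y : Γ) : ℝ≥0∞ := by classical exact if x = y then 1 else 0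

theorem delta_self (x : Γ) : delta x x = 1 := by
  unfold delta
  split_ifs with h
  · rfl
  · exact absurd rfl h

theorem delta_ne_top (x y : Γ) : delta x y ≠ ∞ := by
  unfold delta; split_ifs <;> simp

theorem Pe_zero_delta (μ : Γ → ℝ) (x y : Γ) : Pe μ 0 (x⁻¹ * y) = delta x y := by
  unfold delta
  simp only [Pe]
  split_ifs with h1 h2 h2 <;> first
    | rfl
    | (exact absurd (by rwa [inv_mul_eq_one] at h1) h2)
    | (exact absurd (by rwa [← inv_mul_eq_one (a := x) (b := y)] at h2) h1)

/-- The "previous level" term in the superharmonicity identity. -/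
noncomputable def prevB (μ : Γ → ℝ) : ℕ → Γ → Γ → ℝ≥0∞ → ℝ≥0∞
  | 0 => fun x y _ => delta x y
  | k + 1 => fun x y t => IE μ k x y t

theorem IE_zeroth (μ : Γ → ℝ) (k : ℕ) (x y : Γ) (t : ℝ≥0∞) :
    IE μ k x y t = delta x y
      + ∑' n : ℕ, (((n + 1 + k).choose k : ℕ) : ℝ≥0∞) * Pe μ (n + 1) (x⁻¹ * y) * t ^ (n + 1) := by
  rw [IE_formula]
  rw [tsum_eq_zero_add' ENNReal.summable]
  congr 1
  simp only [Nat.zero_add, Nat.choose_self, Nat.cast_one, one_mul, pow_zero, mul_one]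
  exact Pe_zero_delta μ x y

theorem IE_identity (μ : Γ → ℝ) (k : ℕ) (x y : Γ) (t : ℝ≥0∞) :
    IE μ k x y t = t * (∑' z : Γ, nu μ (x⁻¹ * z) * IE μ k z y t) + prevB μ k x y t := by
  have hmul : t * (∑' z : Γ, nu μ (x⁻¹ * z) * IE μ k z y t)
      = ∑' n : ℕ, (((n + k).choose k : ℕ) : ℝ≥0∞) * Pe μ (n + 1) (x⁻¹ * y) * t ^ (n + 1) := by
    rw [tsum_nu_IE, ← ENNReal.tsum_mul_left]
    exact tsum_congr fun n => by rw [pow_succ]; ring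
  rw [hmul]
  cases k with
  | zero =>
    rw [IE_zeroth μ 0 x y t, add_comm]
    simp only [Nat.choose_zero_right, Nat.cast_one, one_mul]
    rfl
  | succ k =>
    rw [IE_zeroth μ (k+1) x y t]
    have hsplit : ∀ n : ℕ, (((n + 1 + (k+1)).choose (k+1) : ℕ) : ℝ≥0∞)
        * Pe μ (n + 1) (x⁻¹ * y) * t ^ (n + 1)
        = (((n + (k+1)).choose (k+1) : ℕ) : ℝ≥0∞) * Pe μ (n + 1) (x⁻¹ * y) * t ^ (n + 1)
          + (((n + 1 + k).choose k : ℕ) : ℝ≥0∞) * Pe μ (n + 1) (x⁻¹ * y) * t ^ (n + 1) := by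
      intro n
      have hch : (n + 1 + (k+1)).choose (k+1)
          = (n + 1 + k).choose k + (n + (k+1)).choose (k+1) := by
        rw [show n + 1 + (k+1) = (n + 1 + k) + 1 by omega, Nat.choose_succ_succ]
        congr 2
        omega
      rw [hch]
      push_cast
      ring
    rw [tsum_congr hsplit, ENNReal.tsum_add]
    have hprev : prevB μ (k+1) x y t
        = delta x y
          + ∑' n : ℕ, (((n + 1 + k).choose k : ℕ) : ℝ≥0∞) * Pe μ (n + 1) (x⁻¹ * y)
            * t ^ (n + 1) := by
      show IE μ k x y t = _
      exact IE_zeroth μ k x y t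
    rw [hprev]
    ring

theorem prevB_ne_top (hp : IsProbMeasure μ) (hsymm : RWSymmetric μ) {s : ℕ}
    (hGB : DerivBound μ s) {k : ℕ} (hk : k < s) (x y : Γ) :
    prevB μ k x y (ENNReal.ofReal (greenRadius μ)) ≠ ∞ := by
  cases k with
  | zero =>
    exact delta_ne_top x y
  | succ k =>
    exact IE_ne_top hp hsymm hGB (by omega) x y

theorem prevB_pos (hp : IsProbMeasure μ) (hsymm : RWSymmetric μ) (hadm : Admissible μ)
    (k : ℕ) (y : Γ) : 0 < prevB μ k y y (ENNReal.ofReal (greenRadius μ)) := by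
  cases k with
  | zero =>
    show (0:ℝ≥0∞) < delta y y
    rw [delta_self]; exact zero_lt_one
  | succ k =>
    refine IE_pos hadm k y y ?_
    rw [ENNReal.ofReal_pos]
    exact R_pos hp hsymm

end GreenRW

open GreenRW

/-- If for every `0 ≤ k < s` the limits `lim_{r→R⁻} G^{(k)}(x,y|r)` exist and are finite, then
for every `0 ≤ k < s` and all `x, y` the limit `𝔥_k(x,y) = lim_{r→R⁻} I^{(k)}(x,y|r)/I^{(k)}(e,y|r)`
exists and is positive, and for every `y` the function `x ↦ 𝔥_k(x,y)` is `R⁻¹`-superharmonic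
but not `R⁻¹`-harmonic. -/
theorem greenIter_ratio_limit_superharmonic_not_harmonic
    {Γ : Type*} [Group Γ] [Countable Γ] (μ : Γ → ℝ)
    (hprob : IsProbMeasure μ) (hfin : FinSupported μ) (hadm : Admissible μ)
    (hsymm : RWSymmetric μ)
    (s : ℕ) (hs : 1 ≤ s)
    (hG : ∀ k : ℕ, k < s → ∀ x y : Γ, ∃ L : ℝ,
      Filter.Tendsto (fun r : ℝ => iteratedDeriv k (fun t : ℝ => Green μ x y t) r)
        (nhdsWithin (greenRadius μ) (Set.Iio (greenRadius μ))) (nhds L)) :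
    ∀ k : ℕ, k < s → ∀ y : Γ, ∃ 𝔥 : Γ → ℝ,
      (∀ x : Γ, 0 < 𝔥 x) ∧
      (∀ x : Γ, Filter.Tendsto
        (fun r : ℝ => greenIter μ k x y r / greenIter μ k 1 y r)
        (nhdsWithin (greenRadius μ) (Set.Iio (greenRadius μ))) (nhds (𝔥 x))) ∧
      (∀ x : Γ, ∑' z : Γ, μ (x⁻¹ * z) * 𝔥 z ≤ (greenRadius μ)⁻¹ * 𝔥 x) ∧
      ¬ (∀ x : Γ, (greenRadius μ)⁻¹ * 𝔥 x = ∑' z : Γ, μ (x⁻¹ * z) * 𝔥 z) := by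
  intro k hk y
  have hGB : GreenRW.DerivBound μ s := hG
  set R := greenRadius μ with hRdef
  set T := ENNReal.ofReal R with hTdef
  have hR0 : 0 < R := R_pos hprob hsymm
  have hR1 : 1 ≤ R := one_le_R hprob hsymm
  have hRne : R ≠ 0 := hR0.ne'
  have hT1 : (1:ℝ≥0∞) ≤ T := by
    rw [hTdef, ← ENNReal.ofReal_one]; exact ENNReal.ofReal_le_ofReal hR1
  have hTpos : (0:ℝ≥0∞) < T := lt_of_lt_of_le zero_lt_one hT1
  have hfinIE : ∀ x : Γ, IE μ k x y T ≠ ∞ := fun x => IE_ne_top hprob hsymm hGB hk x y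
  have hposIE : ∀ x : Γ, 0 < IE μ k x y T := fun x => IE_pos hadm k x y hTpos
  set D : ℝ := (IE μ k 1 y T).toReal with hDdef
  have hD : 0 < D := ENNReal.toReal_pos (hposIE 1).ne' (hfinIE 1)
  have hDne : D ≠ 0 := hD.ne'
  have hAle : ∀ x : Γ, T * (∑' z : Γ, nu μ (x⁻¹ * z) * IE μ k z y T) ≤ IE μ k x y T := by
    intro x
    conv_rhs => rw [IE_identity μ k x y T]
    exact le_self_add
  have hAfin : ∀ x : Γ, (∑' z : Γ, nu μ (x⁻¹ * z) * IE μ k z y T) ≠ ∞ := by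
    intro x
    refine ne_top_of_le_ne_top (hfinIE x) (le_trans ?_ (hAle x))
    exact le_mul_of_one_le_left' hT1
  have hreal : ∀ x : Γ, (IE μ k x y T).toReal
      = R * (∑' z : Γ, nu μ (x⁻¹ * z) * IE μ k z y T).toReal + (prevB μ k x y T).toReal := by
    intro x
    have h1 := congrArg ENNReal.toReal (IE_identity μ k x y T)
    rwa [ENNReal.toReal_add
        (ENNReal.mul_ne_top ENNReal.ofReal_ne_top (hAfin x))
        (prevB_ne_top hprob hsymm hGB hk x y),
      ENNReal.toReal_mul, hTdef, ENNReal.toReal_ofReal hR0.le] at h1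
  have hconv : ∀ x : Γ, (∑' z : Γ, μ (x⁻¹ * z) * ((IE μ k z y T).toReal / D))
      = (∑' z : Γ, nu μ (x⁻¹ * z) * IE μ k z y T).toReal / D := by
    intro x
    rw [ENNReal.tsum_toReal_eq (fun z => ENNReal.mul_ne_top (nu_ne_top _) (hfinIE z)),
      ← tsum_div_const]
    refine tsum_congr fun z => ?_
    rw [ENNReal.toReal_mul,
      show (nu μ (x⁻¹ * z)).toReal = μ (x⁻¹ * z) from ENNReal.toReal_ofReal (hprob.1 _),
      mul_div_assoc]
  have hmain : ∀ x : Γ, R⁻¹ * ((IE μ k x y T).toReal / D)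
      = (∑' z : Γ, μ (x⁻¹ * z) * ((IE μ k z y T).toReal / D))
        + R⁻¹ * (prevB μ k x y T).toReal / D := by
    intro x
    rw [hconv x, hreal x]
    field_simp
  refine ⟨fun x => (IE μ k x y T).toReal / D,
    fun x => div_pos (ENNReal.toReal_pos (hposIE x).ne' (hfinIE x)) hD,
    fun x => ?_, fun x => ?_, ?_⟩
  · exact (tendsto_greenIter hprob hsymm hadm hGB hk x y).div
      (tendsto_greenIter hprob hsymm hadm hGB hk 1 y) hDne
  · beta_reduce
    rw [hmain x]
    exact le_add_of_nonneg_right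
      (div_nonneg (mul_nonneg (inv_nonneg.mpr hR0.le) ENNReal.toReal_nonneg) hD.le)
  · intro hall
    have h2 : (∑' z : Γ, μ (y⁻¹ * z) * ((IE μ k z y T).toReal / D))
        + R⁻¹ * (prevB μ k y y T).toReal / D
        = ∑' z : Γ, μ (y⁻¹ * z) * ((IE μ k z y T).toReal / D) := by
      rw [← hmain y]
      exact hall y
    have h3 : R⁻¹ * (prevB μ k y y T).toReal / D = 0 := by
      have := h2
      rwa [add_eq_left] at this
    have hBpos : 0 < (prevB μ k y y T).toReal :=
      ENNReal.toReal_pos (prevB_pos hprob hsymm hadm k y).ne'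
        (prevB_ne_top hprob hsymm hGB hk y y)
    have h4 : 0 < R⁻¹ * (prevB μ k y y T).toReal / D :=
      div_pos (mul_pos (inv_pos.mpr hR0) hBpos) hD
    exact h4.ne' h3
end

section
/- Let Γ be a countable discrete group, μ an admissible, aperiodic and symmetric probability measure on Γ, and ω a non-principal ultrafilter on ℕ (with the ratio-limit kernel H well defined, finite and positive). If g belongs to the ratio-limit radical R_μ, then lim_{m→ω} μ^{*m}(g)/μ^{*m}(e) = 1. -/
open Filter Topology

section Aux

variable {Γ : Type*} [Group Γ] {μ : Γ → ℝ}

lemma convPow_succ (n : ℕ) (g : Γ) :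
    convPow μ (n + 1) g = ∑' h : Γ, μ h * convPow μ n (h⁻¹ * g) := rfl

open Classical in
lemma convPow_zero (g : Γ) :
    convPow μ 0 g = if g = (1 : Γ) then (1 : ℝ) else 0 := rfl

lemma convPow_nonneg (hpos : ∀ g, 0 ≤ μ g) : ∀ n (g : Γ), 0 ≤ convPow μ n g
  | 0, g => by rw [convPow_zero]; split <;> norm_num
  | n + 1, g =>
    tsum_nonneg fun h => mul_nonneg (hpos h) (convPow_nonneg hpos n _)

lemma convPow_hasSum (hpos : ∀ g, 0 ≤ μ g) (hsum : HasSum μ 1) :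
    ∀ n, HasSum (convPow μ n) (1 : ℝ)
  | 0 => by
    classical
    have heq : convPow μ 0 = fun g : Γ => if g = (1 : Γ) then (1 : ℝ) else 0 :=
      funext fun g => convPow_zero g
    rw [heq]
    exact hasSum_ite_eq (1 : Γ) (1 : ℝ)
  | n + 1 => by
    have ih := convPow_hasSum hpos hsum n
    set f : Γ × Γ → ℝ := fun p => μ p.1 * convPow μ n (p.1⁻¹ * p.2) with hf
    have hfib : ∀ h : Γ, HasSum (fun g => f (h, g)) (μ h) := by
      intro h
      have : HasSum (fun g => convPow μ n (h⁻¹ * g)) 1 :=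
        ((Equiv.mulLeft h⁻¹).hasSum_iff).mpr ih
      simpa using this.mul_left (μ h)
    have hfnn : 0 ≤ f := fun p => mul_nonneg (hpos _) (convPow_nonneg hpos _ _)
    have hsf : Summable f := by
      rw [summable_prod_of_nonneg hfnn]
      refine ⟨fun h => (hfib h).summable, ?_⟩
      have : (fun h : Γ => ∑' g, f (h, g)) = μ := by
        funext h; exact (hfib h).tsum_eq
      rw [this]; exact hsum.summable
    have hfs : HasSum f 1 := by
      have h0 := hsf.hasSum
      have h1 : HasSum (fun h : Γ => μ h) (∑' p, f p) := h0.prod_fiberwise hfib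
      rwa [← hsum.unique h1] at h0
    have hswap : HasSum (fun p : Γ × Γ => f (p.2, p.1)) 1 := by
      have := ((Equiv.prodComm Γ Γ).hasSum_iff (f := f) (a := 1)).mpr hfs
      exact this
    refine hswap.prod_fiberwise fun g => ?_
    have hs : Summable fun h : Γ => f (h, g) := by
      have := hswap.summable.prod_factor g
      simpa using this
    have := hs.hasSum
    rwa [show ∑' h : Γ, f (h, g) = convPow μ (n + 1) g from rfl] at this

lemma convPow_le_one (hpos : ∀ g, 0 ≤ μ g) (hsum : HasSum μ 1) (n : ℕ) (g : Γ) :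
    convPow μ n g ≤ 1 :=
  le_hasSum (convPow_hasSum hpos hsum n) g fun j _ => convPow_nonneg hpos n j

lemma summable_left (hpos : ∀ g, 0 ≤ μ g) (hsum : HasSum μ 1) (n : ℕ) (c : Γ) :
    Summable fun h : Γ => μ h * convPow μ n (h⁻¹ * c) := by
  refine Summable.of_nonneg_of_le
    (fun h => mul_nonneg (hpos h) (convPow_nonneg hpos n _)) (fun h => ?_) hsum.summable
  calc μ h * convPow μ n (h⁻¹ * c) ≤ μ h * 1 :=
        mul_le_mul_of_nonneg_left (convPow_le_one hpos hsum n _) (hpos h)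
    _ = μ h := mul_one _

lemma summable_right (hpos : ∀ g, 0 ≤ μ g) (hsum : HasSum μ 1) (n : ℕ) (c : Γ) :
    Summable fun k : Γ => convPow μ n (c * k⁻¹) * μ k := by
  refine Summable.of_nonneg_of_le
    (fun k => mul_nonneg (convPow_nonneg hpos n _) (hpos k)) (fun k => ?_) hsum.summable
  calc convPow μ n (c * k⁻¹) * μ k ≤ 1 * μ k :=
        mul_le_mul_of_nonneg_right (convPow_le_one hpos hsum n _) (hpos k)
    _ = μ k := one_mul _

lemma convPow_succ_right (hpos : ∀ g, 0 ≤ μ g) (hsum : HasSum μ 1) :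
    ∀ n (g : Γ), convPow μ (n + 1) g = ∑' k : Γ, convPow μ n (g * k⁻¹) * μ k
  | 0, g => by
    classical
    rw [convPow_succ]
    have h1 : ∀ h : Γ, μ h * convPow μ 0 (h⁻¹ * g) = if h = g then μ g else 0 := by
      intro h
      rw [convPow_zero]
      by_cases hh : h = g <;> simp [hh, inv_mul_eq_one, eq_comm]
    have h2 : ∀ k : Γ, convPow μ 0 (g * k⁻¹) * μ k = if k = g then μ g else 0 := by
      intro k
      rw [convPow_zero]
      by_cases hk : k = g
      · simp [hk]
      · simp only [mul_inv_eq_one, hk, if_false]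
        rw [if_neg (Ne.symm hk), zero_mul]
    simp only [h1, h2]
  | n + 1, g => by
    classical
    rw [convPow_succ]
    have ih : ∀ h : Γ, convPow μ (n + 1) (h⁻¹ * g)
        = ∑' k : Γ, convPow μ n (h⁻¹ * g * k⁻¹) * μ k := fun h =>
      convPow_succ_right hpos hsum n (h⁻¹ * g)
    set F : Γ → Γ → ℝ := fun h k => μ h * (convPow μ n (h⁻¹ * g * k⁻¹) * μ k) with hF
    have hFnn : ∀ h k, 0 ≤ F h k := fun h k =>
      mul_nonneg (hpos h) (mul_nonneg (convPow_nonneg hpos n _) (hpos k))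
    have hFk : ∀ h, Summable (F h) := fun h =>
      ((summable_right hpos hsum n (h⁻¹ * g)).mul_left (μ h))
    have hFh : ∀ k, Summable fun h => F h k := by
      intro k
      have hs := (summable_left hpos hsum n (g * k⁻¹)).mul_right (μ k)
      refine hs.congr fun h => ?_
      show μ h * convPow μ n (h⁻¹ * (g * k⁻¹)) * μ k = F h k
      rw [hF, ← mul_assoc h⁻¹ g k⁻¹]; ring
    have hFsum : Summable (Function.uncurry F) := by
      apply (summable_prod_of_nonneg (f := Function.uncurry F) fun p => hFnn p.1 p.2).mpr
      refine ⟨fun h => hFk h, ?_⟩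
      refine Summable.of_nonneg_of_le (fun h => tsum_nonneg fun k => hFnn h k)
        (fun h => ?_) hsum.summable
      have hle : ∑' k, F h k ≤ ∑' k, μ h * μ k := by
        refine (hFk h).tsum_le_tsum (fun k => ?_) (hsum.summable.mul_left (μ h))
        calc F h k ≤ μ h * (1 * μ k) :=
              mul_le_mul_of_nonneg_left
                (mul_le_mul_of_nonneg_right (convPow_le_one hpos hsum n _) (hpos k)) (hpos h)
          _ = μ h * μ k := by ring
      calc ∑' k, F h k ≤ ∑' k, μ h * μ k := hle
        _ = μ h * ∑' k, μ k := by rw [tsum_mul_left]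
        _ = μ h := by rw [hsum.tsum_eq, mul_one]
    calc (∑' h : Γ, μ h * convPow μ (n + 1) (h⁻¹ * g))
        = ∑' h, ∑' k, F h k := by
          refine tsum_congr fun h => ?_
          rw [ih h, ← tsum_mul_left]
      _ = ∑' k, ∑' h, F h k := (hFsum.tsum_comm' hFk hFh).symm
      _ = ∑' k : Γ, convPow μ (n + 1) (g * k⁻¹) * μ k := by
          refine tsum_congr fun k => ?_
          rw [convPow_succ, ← tsum_mul_right]
          refine tsum_congr fun h => ?_
          rw [hF, ← mul_assoc h⁻¹ g k⁻¹]; ring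

lemma convPow_inv (hpos : ∀ g, 0 ≤ μ g) (hsum : HasSum μ 1)
    (hsymm : ∀ g : Γ, μ g⁻¹ = μ g) :
    ∀ n (g : Γ), convPow μ n g⁻¹ = convPow μ n g
  | 0, g => by
    classical
    rw [convPow_zero, convPow_zero, inv_eq_one]
  | n + 1, g => by
    rw [convPow_succ, convPow_succ_right hpos hsum n g]
    have step : ∀ h : Γ, μ h * convPow μ n (h⁻¹ * g⁻¹) = μ h * convPow μ n (g * h) := by
      intro h
      congr 1
      rw [← mul_inv_rev, convPow_inv hpos hsum hsymm n (g * h)]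
    simp only [step]
    have reindex := (Equiv.inv Γ).tsum_eq (fun h : Γ => μ h * convPow μ n (g * h))
    rw [← reindex]
    refine tsum_congr fun h => ?_
    simp only [Equiv.inv_apply]
    rw [hsymm h, mul_comm (μ h)]

end Aux

/-- For symmetric `μ`: if `g` lies in the ratio-limit radical `R_μ`, then
`lim_{m→ω} μ^{*m}(g)/μ^{*m}(e) = 1`. -/
theorem ratioLimitRadical_convPow_ratio_tendsto_one
    {Γ : Type*} [Group Γ] [Countable Γ] (μ : Γ → ℝ)
    (hprob : IsProbMeasure μ) (hadm : Admissible μ) (hap : RWAperiodic μ)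
    (ω : Ultrafilter ℕ) (hω : (ω : Filter ℕ) ≤ Filter.atTop)
    (H : Γ → Γ → ℝ)
    -- the ratios `P^m(x,y)/P^m(e,y)` are eventually well defined and bounded above and
    -- below by positive constants depending only on `x`
    (hbdd : ∀ x : Γ, ∃ c C : ℝ, 0 < c ∧ ∀ y : Γ, ∀ᶠ m in (ω : Filter ℕ),
      0 < stepProb μ m 1 y ∧ c ≤ stepProb μ m x y / stepProb μ m 1 y ∧
        stepProb μ m x y / stepProb μ m 1 y ≤ C)
    -- the ratio-limit kernel `H` is well defined along `ω`, finite and positive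
    (hH : ∀ x y : Γ, Filter.Tendsto (fun m : ℕ => stepProb μ m x y / stepProb μ m 1 y)
      (ω : Filter ℕ) (nhds (H x y)))
    (hHpos : ∀ x y : Γ, 0 < H x y)
    (hsymm : RWSymmetric μ)
    :
    ∀ g : Γ, (∀ x : Γ, H x g = H x 1) →
      Filter.Tendsto (fun m : ℕ => convPow μ m g / convPow μ m 1) (ω : Filter ℕ) (nhds 1) := by
  intro g hg
  obtain ⟨hpos, hsum⟩ := hprob
  obtain ⟨c, C, hc, hb⟩ := hbdd 1
  have hpg : ∀ᶠ m in (ω : Filter ℕ), 0 < convPow μ m g := by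
    filter_upwards [hb g] with m hm
    simpa [stepProb] using hm.1
  have hp1 : ∀ᶠ m in (ω : Filter ℕ), 0 < convPow μ m 1 := by
    filter_upwards [hb 1] with m hm
    simpa [stepProb] using hm.1
  have hL1 : Filter.Tendsto (fun m : ℕ => convPow μ m g / convPow μ m 1)
      (ω : Filter ℕ) (nhds (H g⁻¹ 1)) := by
    have := hH g⁻¹ 1
    simpa [stepProb] using this
  have hL2 : Filter.Tendsto (fun m : ℕ => convPow μ m 1 / convPow μ m g)
      (ω : Filter ℕ) (nhds (H g g)) := by
    have := hH g g
    simpa [stepProb] using this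
  have hL3 : Filter.Tendsto (fun m : ℕ => convPow μ m g / convPow μ m 1)
      (ω : Filter ℕ) (nhds (H g 1)) := by
    have h := hH g 1
    simp only [stepProb, inv_one, one_mul, mul_one] at h
    have : (fun m : ℕ => convPow μ m g⁻¹ / convPow μ m 1)
        = fun m : ℕ => convPow μ m g / convPow μ m 1 := by
      funext m; rw [convPow_inv hpos hsum hsymm]
    rwa [this] at h
  have hEq1 : H g 1 = H g⁻¹ 1 := tendsto_nhds_unique hL3 hL1
  have hprod : Filter.Tendsto
      (fun m : ℕ => (convPow μ m 1 / convPow μ m g) * (convPow μ m g / convPow μ m 1))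
      (ω : Filter ℕ) (nhds (H g g * H g⁻¹ 1)) := hL2.mul hL1
  have hev : (fun m : ℕ => (convPow μ m 1 / convPow μ m g) * (convPow μ m g / convPow μ m 1))
      =ᶠ[(ω : Filter ℕ)] fun _ => (1 : ℝ) := by
    filter_upwards [hpg, hp1] with m h1 h2
    field_simp
  have hone : H g g * H g⁻¹ 1 = 1 :=
    tendsto_nhds_unique (hprod.congr' hev) tendsto_const_nhds
  have hgg : H g g = H g⁻¹ 1 := (hg g).trans hEq1
  have hpos1 := hHpos g⁻¹ 1
  have hfin : H g⁻¹ 1 = 1 := by nlinarith [hone, hgg]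
  rw [← hfin]
  exact hL1
end
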